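/- Let L be a coatomic logic which enjoys the simple local IL with respect to a family Ψ. Then the following are equivalent: (1) L is semisimple; (2) L enjoys the local LEM with respect to some family; (3) L enjoys the dual local IL with respect to some family; (4) L enjoys the local LEM with respect to Ψ; (5) L enjoys the dual local IL with respect to Ψ. The same equivalence holds with 'parametrized local' in place of 'local' throughout, assuming the simple parametrized local IL with respect to Ψ. -/

import Mathlib

set_option linter.unusedVariables false

open FirstOrder Set

universe u

/-- Substitution composition for terms of a first-order language. -/
theorem FirstOrder.Language.Term.subst_subst' {L : FirstOrder.Language.{u, u}} {α β γ : Type u}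
    (t : L.Term α) (f : α → L.Term β) (g : β → L.Term γ) :
    (t.subst f).subst g = t.subst (fun i => (f i).subst g) := by
  induction t with
  | var => rfl
  | func f ts ih => simp only [Language.Term.subst, ih]

/-- A logic over the absolutely free algebra of `L`-terms in variables `Var`. -/
structure Logic (L : FirstOrder.Language.{u, u}) (Var : Type u) where
  Deriv : Set (L.Term Var) → L.Term Var → Prop
  deriv_refl : ∀ φ : L.Term Var, Deriv {φ} φ
  deriv_mono : ∀ {Γ Δ : Set (L.Term Var)} {φ : L.Term Var}, Deriv Γ φ → Γ ⊆ Δ → Deriv Δ φ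
  deriv_cut : ∀ {Γ Φ : Set (L.Term Var)} {φ : L.Term Var},
      (∀ ψ ∈ Φ, Deriv Γ ψ) → Deriv Φ φ → Deriv Γ φ
  deriv_subst : ∀ {Γ : Set (L.Term Var)} {φ : L.Term Var} (σ : Var → L.Term Var),
      Deriv Γ φ → Deriv ((fun t => t.subst σ) '' Γ) (φ.subst σ)

namespace Logic

variable {L : FirstOrder.Language.{u, u}} {Var : Type u} (Lg : Logic L Var)

/-- `Γ ⊢ φ` for every `φ ∈ Δ`. -/
def DerivAll (Γ Δ : Set (L.Term Var)) : Prop := ∀ φ ∈ Δ, Lg.Deriv Γ φ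

/-- `Γ ⊢ Fm`, i.e. `Γ` derives every formula. -/
def Inc (Γ : Set (L.Term Var)) : Prop := ∀ φ : L.Term Var, Lg.Deriv Γ φ

/-- A theory of the logic: a deductively closed set of formulas. -/
def IsTheory (T : Set (L.Term Var)) : Prop := ∀ φ : L.Term Var, Lg.Deriv T φ → φ ∈ T

/-- A simple theory: a maximal non-trivial theory. -/
def IsSimple (T : Set (L.Term Var)) : Prop :=
  Lg.IsTheory T ∧ T ≠ univ ∧
    ∀ T' : Set (L.Term Var), Lg.IsTheory T' → T' ≠ univ → T ⊆ T' → T' = T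

/-- A semisimple theory: an intersection of simple theories. -/
def IsSemisimple (T : Set (L.Term Var)) : Prop :=
  ∃ S : Set (Set (L.Term Var)), (∀ U ∈ S, Lg.IsSimple U) ∧ T = ⋂₀ S

/-- A semisimple logic: every theory is an intersection of simple theories. -/
def Semisimple : Prop := ∀ T : Set (L.Term Var), Lg.IsTheory T → Lg.IsSemisimple T

/-- A coatomic logic: every non-trivial theory extends to a simple theory. -/
def Coatomic : Prop :=
  ∀ T : Set (L.Term Var), Lg.IsTheory T → T ≠ univ → ∃ U, Lg.IsSimple U ∧ T ⊆ U

/-- A matrix `⟨A, F⟩` is a model of the logic if the preimage of `F` under any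
homomorphism (equivalently, the realization along any valuation) is a theory. -/
def IsModel (A : Type u) [L.Structure A] (F : Set A) : Prop :=
  ∀ v : Var → A, Lg.IsTheory {φ : L.Term Var | φ.realize v ∈ F}

/-- `Γ ⊢ ∅`: `Γ` cannot be jointly designated in any non-trivial model. -/
def Antitheorem (Γ : Set (L.Term Var)) : Prop :=
  ∀ (A : Type u) [L.Structure A], ∀ F : Set A, Lg.IsModel A F → F ≠ univ →
    ∀ v : Var → A, ¬((fun φ : L.Term Var => φ.realize v) '' Γ ⊆ F)

/-- κ-compactness: every inconsistent set has an inconsistent subset of size `< κ`. -/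
def Compact (κ : Cardinal.{u}) : Prop :=
  ∀ Γ : Set (L.Term Var), Lg.Inc Γ → ∃ Γ' ⊆ Γ, Cardinal.mk ↥Γ' < κ ∧ Lg.Inc Γ'

/-- κ-arity: any derivation uses fewer than κ premises. -/
def Ary (κ : Cardinal.{u}) : Prop :=
  ∀ (Γ : Set (L.Term Var)) (φ : L.Term Var), Lg.Deriv Γ φ →
    ∃ Γ' ⊆ Γ, Cardinal.mk ↥Γ' < κ ∧ Lg.Deriv Γ' φ

end Logic

/-- A parametrized family: for each ordinal `α`, a family of sets of formulas in
`α`-many variable slots together with parameter slots (indexed by `Var`). -/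
abbrev PFam (L : FirstOrder.Language.{u, u}) (Var : Type u) : Type (u + 1) :=
  ∀ α : Ordinal.{u}, Set (Set (L.Term (α.ToType ⊕ Var)))

/-- A local (parameter-free) family. -/
abbrev LFam (L : FirstOrder.Language.{u, u}) (Var : Type u) : Type (u + 1) :=
  ∀ α : Ordinal.{u}, Set (Set (L.Term α.ToType))

/-- A global family: a single set of formulas for each ordinal `α`. -/
abbrev GFam (L : FirstOrder.Language.{u, u}) (Var : Type u) : Type (u + 1) :=
  ∀ α : Ordinal.{u}, Set (L.Term α.ToType)

namespace Logic

variable {L : FirstOrder.Language.{u, u}} {Var : Type u}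

/-- `I(φ̄, π̄)`: instantiation of a parametrized set of formulas. -/
def pInst {α : Ordinal.{u}} (I : Set (L.Term (α.ToType ⊕ Var)))
    (phis : α.ToType → L.Term Var) (pis : Var → L.Term Var) : Set (L.Term Var) :=
  (fun t => t.subst (Sum.elim phis pis)) '' I

/-- `I(φ̄)`: instantiation of a parameter-free set of formulas. -/
def lInst {α : Ordinal.{u}} (I : Set (L.Term α.ToType))
    (phis : α.ToType → L.Term Var) : Set (L.Term Var) :=
  (fun t => t.subst phis) '' I

variable (Lg : Logic L Var)

/-- The κ-ary parametrized local inconsistency lemma w.r.t. the family `Ψ`. -/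
def ParamLocalIL (κ : Cardinal.{u}) (Ψ : PFam L Var) : Prop :=
  ∀ α : Ordinal.{u}, 0 < α → α < κ.ord →
    ∀ (Γ : Set (L.Term Var)) (phis : α.ToType → L.Term Var),
      Lg.Inc (Γ ∪ range phis) ↔
        ∃ I ∈ Ψ α, ∃ pis : Var → L.Term Var, Lg.DerivAll Γ (pInst I phis pis)

/-- The κ-ary local inconsistency lemma w.r.t. the family `Ψ`. -/
def LocalIL (κ : Cardinal.{u}) (Ψ : LFam L Var) : Prop :=
  ∀ α : Ordinal.{u}, 0 < α → α < κ.ord →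
    ∀ (Γ : Set (L.Term Var)) (phis : α.ToType → L.Term Var),
      Lg.Inc (Γ ∪ range phis) ↔ ∃ I ∈ Ψ α, Lg.DerivAll Γ (lInst I phis)

/-- The κ-ary global inconsistency lemma w.r.t. the family `Ψ`. -/
def GlobalIL (κ : Cardinal.{u}) (Ψ : GFam L Var) : Prop :=
  Lg.LocalIL κ (fun α => {Ψ α})

/-- The κ-ary dual parametrized local inconsistency lemma w.r.t. the family `Ψ`. -/
def DualParamLocalIL (κ : Cardinal.{u}) (Ψ : PFam L Var) : Prop :=
  ∀ α : Ordinal.{u}, 0 < α → α < κ.ord →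
    ∀ (Γ : Set (L.Term Var)) (phis : α.ToType → L.Term Var),
      (∀ i, Lg.Deriv Γ (phis i)) ↔
        ∀ I ∈ Ψ α, ∀ pis : Var → L.Term Var, Lg.Inc (Γ ∪ pInst I phis pis)

/-- The κ-ary dual local inconsistency lemma w.r.t. the family `Ψ`. -/
def DualLocalIL (κ : Cardinal.{u}) (Ψ : LFam L Var) : Prop :=
  ∀ α : Ordinal.{u}, 0 < α → α < κ.ord →
    ∀ (Γ : Set (L.Term Var)) (phis : α.ToType → L.Term Var),
      (∀ i, Lg.Deriv Γ (phis i)) ↔ ∀ I ∈ Ψ α, Lg.Inc (Γ ∪ lInst I phis)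

/-- The κ-ary dual global inconsistency lemma w.r.t. the family `Ψ`. -/
def DualGlobalIL (κ : Cardinal.{u}) (Ψ : GFam L Var) : Prop :=
  Lg.DualLocalIL κ (fun α => {Ψ α})

/-- The κ-ary classical parametrized local IL: both the ordinary and dual IL. -/
def ClassicalParamLocalIL (κ : Cardinal.{u}) (Ψ : PFam L Var) : Prop :=
  Lg.ParamLocalIL κ Ψ ∧ Lg.DualParamLocalIL κ Ψ

/-- The κ-ary classical local IL: both the ordinary and dual IL. -/
def ClassicalLocalIL (κ : Cardinal.{u}) (Ψ : LFam L Var) : Prop :=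
  Lg.LocalIL κ Ψ ∧ Lg.DualLocalIL κ Ψ

/-- The κ-ary classical global IL: both the ordinary and dual IL. -/
def ClassicalGlobalIL (κ : Cardinal.{u}) (Ψ : GFam L Var) : Prop :=
  Lg.GlobalIL κ Ψ ∧ Lg.DualGlobalIL κ Ψ

/-- The κ-ary parametrized local law of the excluded middle w.r.t. `Ψ`. -/
def ParamLocalLEM (κ : Cardinal.{u}) (Ψ : PFam L Var) : Prop :=
  (∀ α : Ordinal.{u}, 0 < α → α < κ.ord → ∀ I ∈ Ψ α,
    ∀ (phis : α.ToType → L.Term Var) (pis : Var → L.Term Var),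
      Lg.Inc (range phis ∪ pInst I phis pis)) ∧
  (∀ α : Ordinal.{u}, 0 < α → α < κ.ord →
    ∀ (Γ : Set (L.Term Var)) (phis : α.ToType → L.Term Var) (ψ : L.Term Var),
      Lg.Deriv (Γ ∪ range phis) ψ →
      (∀ I ∈ Ψ α, ∀ pis : Var → L.Term Var, Lg.Deriv (Γ ∪ pInst I phis pis) ψ) →
      Lg.Deriv Γ ψ)

/-- The κ-ary local law of the excluded middle w.r.t. `Ψ`. -/
def LocalLEM (κ : Cardinal.{u}) (Ψ : LFam L Var) : Prop :=
  (∀ α : Ordinal.{u}, 0 < α → α < κ.ord → ∀ I ∈ Ψ α,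
    ∀ phis : α.ToType → L.Term Var, Lg.Inc (range phis ∪ lInst I phis)) ∧
  (∀ α : Ordinal.{u}, 0 < α → α < κ.ord →
    ∀ (Γ : Set (L.Term Var)) (phis : α.ToType → L.Term Var) (ψ : L.Term Var),
      Lg.Deriv (Γ ∪ range phis) ψ →
      (∀ I ∈ Ψ α, Lg.Deriv (Γ ∪ lInst I phis) ψ) → Lg.Deriv Γ ψ)

/-- The κ-ary simple parametrized local IL w.r.t. `Ψ`. -/
def SimpleParamLocalIL (κ : Cardinal.{u}) (Ψ : PFam L Var) : Prop :=
  (∀ α : Ordinal.{u}, 0 < α → α < κ.ord → ∀ I ∈ Ψ α,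
    ∀ (phis : α.ToType → L.Term Var) (pis : Var → L.Term Var),
      Lg.Inc (range phis ∪ pInst I phis pis)) ∧
  (∀ α : Ordinal.{u}, 0 < α → α < κ.ord →
    ∀ T : Set (L.Term Var), Lg.IsSimple T → ∀ phis : α.ToType → L.Term Var,
      Lg.Inc (T ∪ range phis) →
        ∃ I ∈ Ψ α, ∃ pis : Var → L.Term Var, Lg.DerivAll T (pInst I phis pis))

/-- The κ-ary simple local IL w.r.t. `Ψ`. -/
def SimpleLocalIL (κ : Cardinal.{u}) (Ψ : LFam L Var) : Prop :=
  (∀ α : Ordinal.{u}, 0 < α → α < κ.ord → ∀ I ∈ Ψ α,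
    ∀ phis : α.ToType → L.Term Var, Lg.Inc (range phis ∪ lInst I phis)) ∧
  (∀ α : Ordinal.{u}, 0 < α → α < κ.ord →
    ∀ T : Set (L.Term Var), Lg.IsSimple T → ∀ phis : α.ToType → L.Term Var,
      Lg.Inc (T ∪ range phis) → ∃ I ∈ Ψ α, Lg.DerivAll T (lInst I phis))

end Logic

/-- Family for the parametrized local DDT: sets of formulas `I(p̄, q, r̄)`. -/
abbrev PFamD (L : FirstOrder.Language.{u, u}) (Var : Type u) : Type (u + 1) :=
  ∀ α : Ordinal.{u}, Set (Set (L.Term (α.ToType ⊕ (PUnit.{u + 1} ⊕ Var))))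

/-- Family for the local DDT: sets of formulas `I(p̄, q)`. -/
abbrev LFamD (L : FirstOrder.Language.{u, u}) (Var : Type u) : Type (u + 1) :=
  ∀ α : Ordinal.{u}, Set (Set (L.Term (α.ToType ⊕ PUnit.{u + 1})))

/-- Family for the global DDT: a single set `I(p̄, q)` for each `α`. -/
abbrev GFamD (L : FirstOrder.Language.{u, u}) (Var : Type u) : Type (u + 1) :=
  ∀ α : Ordinal.{u}, Set (L.Term (α.ToType ⊕ PUnit.{u + 1}))

namespace Logic

variable {L : FirstOrder.Language.{u, u}} {Var : Type u}

/-- `I(φ̄, ψ)`: instantiation of a DDT set of formulas. -/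
def dInst {α : Ordinal.{u}} (I : Set (L.Term (α.ToType ⊕ PUnit.{u + 1})))
    (phis : α.ToType → L.Term Var) (ψ : L.Term Var) : Set (L.Term Var) :=
  (fun t => t.subst (Sum.elim phis (fun _ => ψ))) '' I

/-- `I(φ̄, ψ, π̄)`: instantiation of a parametrized DDT set of formulas. -/
def pdInst {α : Ordinal.{u}} (I : Set (L.Term (α.ToType ⊕ (PUnit.{u + 1} ⊕ Var))))
    (phis : α.ToType → L.Term Var) (ψ : L.Term Var) (pis : Var → L.Term Var) :
    Set (L.Term Var) :=
  (fun t => t.subst (Sum.elim phis (Sum.elim (fun _ => ψ) pis))) '' I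

variable (Lg : Logic L Var)

/-- The κ-ary local deduction--detachment theorem w.r.t. `Φ`. -/
def LocalDDT (κ : Cardinal.{u}) (Φ : LFamD L Var) : Prop :=
  ∀ α : Ordinal.{u}, 0 < α → α < κ.ord →
    ∀ (Γ : Set (L.Term Var)) (phis : α.ToType → L.Term Var) (ψ : L.Term Var),
      Lg.Deriv (Γ ∪ range phis) ψ ↔ ∃ I ∈ Φ α, Lg.DerivAll Γ (dInst I phis ψ)

/-- The κ-ary global deduction--detachment theorem w.r.t. `Φ`. -/
def GlobalDDT (κ : Cardinal.{u}) (Φ : GFamD L Var) : Prop :=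
  Lg.LocalDDT κ (fun α => {Φ α})

/-- The κ-ary parametrized local deduction--detachment theorem w.r.t. `Φ`. -/
def ParamLocalDDT (κ : Cardinal.{u}) (Φ : PFamD L Var) : Prop :=
  ∀ α : Ordinal.{u}, 0 < α → α < κ.ord →
    ∀ (Γ : Set (L.Term Var)) (phis : α.ToType → L.Term Var) (ψ : L.Term Var),
      Lg.Deriv (Γ ∪ range phis) ψ ↔
        ∃ I ∈ Φ α, ∃ pis : Var → L.Term Var, Lg.DerivAll Γ (pdInst I phis ψ pis)

/-- A protoimplication set: a set `Δ(p, q)` of formulas in two variables with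
`∅ ⊢ Δ(p, p)` and `p, Δ(p, q) ⊢ q` (stated via all instances, by structurality). -/
def HasProtoimplication : Prop :=
  ∃ Δ : Set (L.Term (ULift.{u} Bool)),
    (∀ φ : L.Term Var,
      Lg.DerivAll ∅ ((fun t => t.subst (fun _ => φ)) '' Δ)) ∧
    (∀ φ ψ : L.Term Var,
      Lg.Deriv (insert φ ((fun t => t.subst (fun b => if b.down then ψ else φ)) '' Δ)) ψ)

/-- A rule `Γ ⊢ φ̄` is antiadmissible: substitution instances preserve
inconsistency in every context. -/
def Antiadmissible {ι : Type u} (Γ : Set (L.Term Var)) (phis : ι → L.Term Var) : Prop :=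
  ∀ (σ : Var → L.Term Var) (Δ : Set (L.Term Var)),
    Lg.Inc (range (fun i => (phis i).subst σ) ∪ Δ) →
    Lg.Inc ((fun t => t.subst σ) '' Γ ∪ Δ)

/-- The semisimple companion of a logic: the logic determined by the
simple theories of `Lg`. -/
def companion (Lg : Logic L Var) : Logic L Var where
  Deriv Γ φ := ∀ T : Set (L.Term Var), Lg.IsSimple T →
    ∀ σ : Var → L.Term Var, (fun t => t.subst σ) '' Γ ⊆ T → φ.subst σ ∈ T
  deriv_refl := by
    intro φ T _ σ h
    exact h ⟨φ, rfl, rfl⟩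
  deriv_mono := by
    intro Γ Δ φ hΓ hsub T hT σ h
    exact hΓ T hT σ (fun x hx => h ((Set.image_mono hsub) hx))
  deriv_cut := by
    intro Γ Φ φ hΓ hΦ T hT σ h
    refine hΦ T hT σ ?_
    rintro x ⟨ψ, hψ, rfl⟩
    exact hΓ ψ hψ T hT σ h
  deriv_subst := by
    intro Γ φ σ hΓ T hT τ h
    rw [FirstOrder.Language.Term.subst_subst']
    refine hΓ T hT (fun v => (σ v).subst τ) ?_
    rintro x ⟨ψ, hψ, rfl⟩
    show (ψ.subst fun v => (σ v).subst τ) ∈ T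
    rw [← FirstOrder.Language.Term.subst_subst']
    exact h ⟨ψ.subst σ, ⟨ψ, hψ, rfl⟩, rfl⟩

/-- Equivalence of two parametrized IL families, stated through all of their
instances (which, by structurality, is equivalent to the schematic entailments
`I(p̄, q̄) ⊢ I'(p̄, π̄')`). -/
def FamEquiv (Lg : Logic L Var) (κ : Cardinal.{u}) (Ψ Ψ' : PFam L Var) : Prop :=
  (∀ α : Ordinal.{u}, 0 < α → α < κ.ord →
    ∀ I ∈ Ψ α, ∃ I' ∈ Ψ' α, ∃ pis' : Var → L.Term (α.ToType ⊕ Var),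
      ∀ (phis : α.ToType → L.Term Var) (rhos : Var → L.Term Var),
        Lg.DerivAll (pInst I phis rhos)
          (pInst I' phis (fun v => (pis' v).subst (Sum.elim phis rhos)))) ∧
  (∀ α : Ordinal.{u}, 0 < α → α < κ.ord →
    ∀ I' ∈ Ψ' α, ∃ I ∈ Ψ α, ∃ pis : Var → L.Term (α.ToType ⊕ Var),
      ∀ (phis : α.ToType → L.Term Var) (rhos : Var → L.Term Var),
        Lg.DerivAll (pInst I' phis rhos)
          (pInst I phis (fun v => (pis v).subst (Sum.elim phis rhos))))

end Logic

/-! In a semisimple logic `Γ ⊢ ψ` iff `ψ` lies in every simple theory containing `Γ`, and a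
simple theory `U` either contains `φ̄` or, by the simple IL, derives some `I(φ̄, π̄)`; this case
split yields the LEM and the dual IL w.r.t. `Ψ`. Conversely, if `ψ` lies outside a theory `T`,
either principle applied to `φ̄ = ψ` provides an `I(ψ, π̄)` consistent with `T` but inconsistent
with `ψ`; a simple theory extending `T ∪ I(ψ, π̄)` (coatomicity) then omits `ψ`, so `T` is the
intersection of its simple extensions. The local case is the parametrized one for families whose
sets mention no parameters. -/

theorem Cardinal.one_lt_ord {κ : Cardinal.{u}} (hκ : 1 < κ) : (1 : Ordinal.{u}) < κ.ord :=
  Cardinal.lt_ord.2 (by simpa using hκ)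

namespace Logic

variable {L : FirstOrder.Language.{u, u}} {Var : Type u} (Lg : Logic L Var)

theorem deriv_of_mem {Γ : Set (L.Term Var)} {φ : L.Term Var} (h : φ ∈ Γ) : Lg.Deriv Γ φ :=
  Lg.deriv_mono (Lg.deriv_refl φ) (singleton_subset_iff.2 h)

variable {Lg}

theorem derivAll_of_subset {Γ Δ : Set (L.Term Var)} (h : Δ ⊆ Γ) : Lg.DerivAll Γ Δ :=
  fun _ hφ => Lg.deriv_of_mem (h hφ)

theorem DerivAll.union {Γ Δ₁ Δ₂ : Set (L.Term Var)} (h₁ : Lg.DerivAll Γ Δ₁)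
    (h₂ : Lg.DerivAll Γ Δ₂) : Lg.DerivAll Γ (Δ₁ ∪ Δ₂) :=
  fun φ hφ => hφ.elim (h₁ φ) (h₂ φ)

theorem Inc.of_derivAll {Γ Δ : Set (L.Term Var)} (hΔ : Lg.Inc Δ) (h : Lg.DerivAll Γ Δ) :
    Lg.Inc Γ :=
  fun φ => Lg.deriv_cut h (hΔ φ)

theorem IsTheory.mem_of_deriv {T Γ : Set (L.Term Var)} {φ : L.Term Var} (hT : Lg.IsTheory T)
    (hΓ : Lg.DerivAll T Γ) (h : Lg.Deriv Γ φ) : φ ∈ T :=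
  hT φ (Lg.deriv_cut hΓ h)

variable (Lg) in
theorem isTheory_setOf_deriv (Γ : Set (L.Term Var)) : Lg.IsTheory {φ | Lg.Deriv Γ φ} :=
  fun _ h => Lg.deriv_cut (fun _ hψ => hψ) h

theorem IsSimple.not_inc {U : Set (L.Term Var)} (hU : Lg.IsSimple U) : ¬ Lg.Inc U :=
  fun h => hU.2.1 (eq_univ_of_forall fun φ => hU.1 φ (h φ))

theorem IsSimple.subset_of_not_inc {U Δ : Set (L.Term Var)} (hU : Lg.IsSimple U)
    (h : ¬ Lg.Inc (U ∪ Δ)) : Δ ⊆ U := by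
  have hUΔ : {φ | Lg.Deriv (U ∪ Δ) φ} = U :=
    hU.2.2 _ (Lg.isTheory_setOf_deriv _) (mt eq_univ_iff_forall.1 h)
      fun φ hφ => Lg.deriv_of_mem (Or.inl hφ)
  exact fun φ hφ => hUΔ ▸ Lg.deriv_of_mem (Or.inr hφ)

theorem Semisimple.deriv_of_forall_isSimple (hss : Lg.Semisimple) {Γ : Set (L.Term Var)}
    {ψ : L.Term Var} (h : ∀ U, Lg.IsSimple U → Γ ⊆ U → ψ ∈ U) : Lg.Deriv Γ ψ := by
  obtain ⟨S, hS, hΓS⟩ := hss _ (Lg.isTheory_setOf_deriv Γ)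
  have hψ : ψ ∈ ⋂₀ S := fun U hU =>
    h U (hS U hU) fun φ hφ => (hΓS ▸ Lg.deriv_of_mem hφ : φ ∈ ⋂₀ S) U hU
  exact (hΓS ▸ hψ : ψ ∈ {φ | Lg.Deriv Γ φ})

theorem semisimple_of_separating (hco : Lg.Coatomic)
    (h : ∀ T, Lg.IsTheory T → ∀ ψ ∉ T, ∃ Δ, ¬ Lg.Inc (T ∪ Δ) ∧ Lg.Inc ({ψ} ∪ Δ)) :
    Lg.Semisimple := by
  intro T hT
  refine ⟨{U | Lg.IsSimple U ∧ T ⊆ U}, fun U hU => hU.1,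
    Subset.antisymm (subset_sInter fun U hU => hU.2) fun ψ hψ => ?_⟩
  by_contra hψT
  obtain ⟨Δ, hTΔ, hψΔ⟩ := h T hT ψ hψT
  obtain ⟨U, hU, hTΔU⟩ := hco _ (Lg.isTheory_setOf_deriv _) (mt eq_univ_iff_forall.1 hTΔ)
  have hTU : T ⊆ U := fun φ hφ => hTΔU (Lg.deriv_of_mem (Or.inl hφ))
  have hΔU : Δ ⊆ U := fun φ hφ => hTΔU (Lg.deriv_of_mem (Or.inr hφ))
  exact hU.not_inc (hψΔ.of_derivAll (derivAll_of_subset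
    (union_subset (singleton_subset_iff.2 (hψ U ⟨hU, hTU⟩)) hΔU)))

variable {κ : Cardinal.{u}} {Ψ : PFam L Var}

theorem SimpleParamLocalIL.range_subset_or_derivAll (hs : Lg.SimpleParamLocalIL κ Ψ)
    {α : Ordinal.{u}} (hα : 0 < α) (hακ : α < κ.ord) {U : Set (L.Term Var)}
    (hU : Lg.IsSimple U) (phis : α.ToType → L.Term Var) :
    range phis ⊆ U ∨ ∃ I ∈ Ψ α, ∃ pis, Lg.DerivAll U (pInst I phis pis) := by
  by_cases hinc : Lg.Inc (U ∪ range phis)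
  · exact Or.inr (hs.2 α hα hακ U hU phis hinc)
  · exact Or.inl (hU.subset_of_not_inc hinc)

theorem paramLocalLEM_of_semisimple (hs : Lg.SimpleParamLocalIL κ Ψ) (hss : Lg.Semisimple) :
    Lg.ParamLocalLEM κ Ψ := by
  refine ⟨hs.1, fun α hα hακ Γ phis ψ hphis hI => hss.deriv_of_forall_isSimple fun U hU hΓU => ?_⟩
  rcases hs.range_subset_or_derivAll hα hακ hU phis with hphisU | ⟨I, hI', pis, hIU⟩
  · exact hU.1.mem_of_deriv ((derivAll_of_subset hΓU).union (derivAll_of_subset hphisU)) hphis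
  · exact hU.1.mem_of_deriv ((derivAll_of_subset hΓU).union hIU) (hI I hI' pis)

theorem dualParamLocalIL_of_semisimple (hs : Lg.SimpleParamLocalIL κ Ψ)
    (hss : Lg.Semisimple) : Lg.DualParamLocalIL κ Ψ := by
  refine fun α hα hακ Γ phis => ⟨fun h I hI pis => ?_, fun h i => ?_⟩
  · refine (hs.1 α hα hακ I hI phis pis).of_derivAll (DerivAll.union ?_ ?_)
    · rintro _ ⟨i, rfl⟩
      exact Lg.deriv_mono (h i) subset_union_left
    · exact derivAll_of_subset subset_union_right
  · refine hss.deriv_of_forall_isSimple fun U hU hΓU => ?_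
    rcases hs.range_subset_or_derivAll hα hακ hU phis with hphisU | ⟨I, hI, pis, hIU⟩
    · exact hphisU ⟨i, rfl⟩
    · exact (hU.not_inc ((h I hI pis).of_derivAll ((derivAll_of_subset hΓU).union hIU))).elim

theorem semisimple_of_paramLocalLEM (hco : Lg.Coatomic) (hκ : 1 < κ)
    (hlem : Lg.ParamLocalLEM κ Ψ) : Lg.Semisimple := by
  refine semisimple_of_separating hco fun T hT ψ hψ => ?_
  let phis : (1 : Ordinal.{u}).ToType → L.Term Var := fun _ => ψ
  obtain ⟨I, hI, pis, hψI⟩ : ∃ I ∈ Ψ 1, ∃ pis, ¬ Lg.Deriv (T ∪ pInst I phis pis) ψ := by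
    by_contra! h
    exact hψ (hT ψ (hlem.2 1 zero_lt_one (Cardinal.one_lt_ord hκ) T phis ψ
      (Lg.deriv_of_mem (Or.inr ⟨default, rfl⟩)) h))
  refine ⟨pInst I phis pis, fun h => hψI (h ψ), ?_⟩
  simpa only [phis, range_const] using hlem.1 1 zero_lt_one (Cardinal.one_lt_ord hκ) I hI phis pis

theorem semisimple_of_dualParamLocalIL (hco : Lg.Coatomic) (hκ : 1 < κ)
    (hd : Lg.DualParamLocalIL κ Ψ) : Lg.Semisimple := by
  refine semisimple_of_separating hco fun T hT ψ hψ => ?_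
  let phis : (1 : Ordinal.{u}).ToType → L.Term Var := fun _ => ψ
  have hd1 := hd 1 zero_lt_one (Cardinal.one_lt_ord hκ)
  obtain ⟨I, hI, pis, hTI⟩ : ∃ I ∈ Ψ 1, ∃ pis, ¬ Lg.Inc (T ∪ pInst I phis pis) := by
    by_contra! h
    exact hψ (hT ψ ((hd1 T phis).2 h default))
  exact ⟨pInst I phis pis, hTI, (hd1 {ψ} phis).1 (fun _ => Lg.deriv_refl ψ) I hI pis⟩

end Logic

def LFam.toPFam {L : FirstOrder.Language.{u, u}} {Var : Type u} (Ψ : LFam L Var) :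
    PFam L Var :=
  fun α => image (fun t => t.subst (Language.Term.var ∘ Sum.inl)) '' Ψ α

namespace Logic

variable {L : FirstOrder.Language.{u, u}} {Var : Type u} {Lg : Logic L Var}
  {κ : Cardinal.{u}} {Ψ : LFam L Var}

theorem pInst_image_subst_inl {α : Ordinal.{u}} (I : Set (L.Term α.ToType))
    (phis : α.ToType → L.Term Var) (pis : Var → L.Term Var) :
    pInst (image (fun t => t.subst (Language.Term.var ∘ Sum.inl)) I) phis pis = lInst I phis := by
  simp only [pInst, lInst, image_image, Language.Term.subst_subst']
  rfl

instance nonempty_subst : Nonempty (Var → L.Term Var) := ⟨Language.Term.var⟩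

theorem simpleParamLocalIL_toPFam_iff :
    Lg.SimpleParamLocalIL κ Ψ.toPFam ↔ Lg.SimpleLocalIL κ Ψ := by
  simp only [SimpleParamLocalIL, SimpleLocalIL, LFam.toPFam, forall_mem_image, exists_mem_image,
    pInst_image_subst_inl, forall_const, exists_const]

theorem paramLocalLEM_toPFam_iff : Lg.ParamLocalLEM κ Ψ.toPFam ↔ Lg.LocalLEM κ Ψ := by
  simp only [ParamLocalLEM, LocalLEM, LFam.toPFam, forall_mem_image, pInst_image_subst_inl,
    forall_const]

theorem dualParamLocalIL_toPFam_iff : Lg.DualParamLocalIL κ Ψ.toPFam ↔ Lg.DualLocalIL κ Ψ := by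
  simp only [DualParamLocalIL, DualLocalIL, LFam.toPFam, forall_mem_image, pInst_image_subst_inl,
    forall_const]

end Logic

/-- for a coatomic logic with the simple (parametrized) local IL
w.r.t. `Ψ`, semisimplicity, the (parametrized) local LEM (w.r.t. some family or
w.r.t. `Ψ`), and the dual (parametrized) local IL (w.r.t. some family or w.r.t.
`Ψ`) are all equivalent. -/
theorem statement_13 {L : FirstOrder.Language.{u, u}} {Var : Type u} (Lg : Logic L Var) (hco : Lg.Coatomic) :
    (∀ Ψ : LFam L Var, Lg.SimpleLocalIL 2 Ψ →
      [Lg.Semisimple,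
       ∃ Ψ' : LFam L Var, Lg.LocalLEM 2 Ψ',
       ∃ Ψ' : LFam L Var, Lg.DualLocalIL 2 Ψ',
       Lg.LocalLEM 2 Ψ,
       Lg.DualLocalIL 2 Ψ].TFAE) ∧
    (∀ Ψ : PFam L Var, Lg.SimpleParamLocalIL 2 Ψ →
      [Lg.Semisimple,
       ∃ Ψ' : PFam L Var, Lg.ParamLocalLEM 2 Ψ',
       ∃ Ψ' : PFam L Var, Lg.DualParamLocalIL 2 Ψ',
       Lg.ParamLocalLEM 2 Ψ,
       Lg.DualParamLocalIL 2 Ψ].TFAE) := by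
  refine ⟨fun Ψ hs => ?_, fun Ψ hs => ?_⟩
  · have hs' := Logic.simpleParamLocalIL_toPFam_iff.2 hs
    tfae_have 1 → 4 := fun h =>
      Logic.paramLocalLEM_toPFam_iff.1 (Logic.paramLocalLEM_of_semisimple hs' h)
    tfae_have 4 → 2 := fun h => ⟨Ψ, h⟩
    tfae_have 2 → 1 := fun ⟨_, h⟩ =>
      Logic.semisimple_of_paramLocalLEM hco Cardinal.one_lt_two (Logic.paramLocalLEM_toPFam_iff.2 h)
    tfae_have 1 → 5 := fun h =>
      Logic.dualParamLocalIL_toPFam_iff.1 (Logic.dualParamLocalIL_of_semisimple hs' h)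
    tfae_have 5 → 3 := fun h => ⟨Ψ, h⟩
    tfae_have 3 → 1 := fun ⟨_, h⟩ =>
      Logic.semisimple_of_dualParamLocalIL hco Cardinal.one_lt_two (Logic.dualParamLocalIL_toPFam_iff.2 h)
    tfae_finish
  · tfae_have 1 → 4 := Logic.paramLocalLEM_of_semisimple hs
    tfae_have 4 → 2 := fun h => ⟨Ψ, h⟩
    tfae_have 2 → 1 := fun ⟨_, h⟩ => Logic.semisimple_of_paramLocalLEM hco Cardinal.one_lt_two h
    tfae_have 1 → 5 := Logic.dualParamLocalIL_of_semisimple hs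
    tfae_have 5 → 3 := fun h => ⟨Ψ, h⟩
    tfae_have 3 → 1 := fun ⟨_, h⟩ => Logic.semisimple_of_dualParamLocalIL hco Cardinal.one_lt_two h
    tfae_finish
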